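/- arXiv:1712.02468 — 3 statements merged into one kernel-verified Lean document; each statement's English description precedes it below -/
import Mathlib

section
/- For real x with |x| < 1, real a > 0, and any angle φ, one has the power series identity (1 − 2x cos φ + x²)^{−a/2} = ∑_{n=0}^∞ (∑_{k+l=n} α_k α_l e^{iφ(k−l)}) x^n, where α_k are the Taylor coefficients of (1−z)^{−a/2}. -/
/-!
With `z = x e^{iφ}` one has `1 - 2x cos φ + x² = (1 - z)(1 - z̄) = |1 - z|²`, and since `1 - z`
lies off the branch cut, `(1 - z)^s (1 - z̄)^s = |1 - z|^{2s}` for real `s`. Both factors are given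
by the binomial series `(1 - w)^s = ∑ (-1)^k C(s, k) w^k`, absolutely convergent for `|w| < 1`,
so their product is the Cauchy product of the two series; `z^k z̄^(n-k) = x^n e^{iφ(k-(n-k))}`.
-/

open Complex Finset ComplexConjugate

theorem Ring.choose_eq_prod_range_div_factorial {K : Type*} [Field K] [CharZero K] (r : K)
    (n : ℕ) : Ring.choose r n = (∏ i ∈ range n, (r - i)) / n.factorial := by
  rw [Ring.choose_eq_smul, smul_eq_mul, ← descPochhammer_eval_eq_prod_range, inv_mul_eq_div,
    ← Polynomial.eval₂_smulOneHom_eq_smeval, RingHom.ext_int RingHom.smulOneHom (Int.castRingHom K),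
    ← Polynomial.eval_map, descPochhammer_map]

theorem neg_mem_eball_zero_one {E : Type*} [SeminormedAddCommGroup E] {z : E} (hz : ‖z‖ < 1) :
    -z ∈ Metric.eball (0 : E) 1 := by
  rw [← ENNReal.ofReal_one, Metric.eball_ofReal]
  simpa using hz

namespace Complex

theorem hasSum_one_sub_cpow {s z : ℂ} (hz : ‖z‖ < 1) :
    HasSum (fun n ↦ (-1) ^ n * Ring.choose s n * z ^ n) ((1 - z) ^ s) := by
  have := (one_add_cpow_hasFPowerSeriesOnBall_zero (a := s)).hasSum (neg_mem_eball_zero_one hz)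
  simp only [binomialSeries_apply, List.ofFn_const, List.prod_replicate, zero_sub, smul_eq_mul,
    ← sub_eq_add_neg, neg_pow z] at this
  simpa only [mul_comm, mul_assoc, mul_left_comm] using this

theorem summable_norm_one_sub_cpow_series {s z : ℂ} (hz : ‖z‖ < 1) :
    Summable (fun n ↦ ‖(-1) ^ n * Ring.choose s n * z ^ n‖) := by
  convert (binomialSeries ℂ s).summable_norm_apply
    (Metric.eball_subset_eball binomialSeries_radius_ge_one (neg_mem_eball_zero_one hz))
    using 2 with n
  simp only [binomialSeries_apply, List.ofFn_const, List.prod_replicate, smul_eq_mul, norm_mul,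
    norm_pow, norm_neg, norm_one, one_pow, one_mul]

theorem hasSum_one_sub_cpow_mul_one_sub_cpow {s z w : ℂ} (hz : ‖z‖ < 1) (hw : ‖w‖ < 1) :
    HasSum (fun n ↦ ∑ k ∈ range (n + 1),
      ((-1) ^ k * Ring.choose s k * z ^ k) * ((-1) ^ (n - k) * Ring.choose s (n - k) * w ^ (n - k)))
      ((1 - z) ^ s * (1 - w) ^ s) := by
  have := hasSum_sum_range_mul_of_summable_norm
    (summable_norm_one_sub_cpow_series (s := s) hz) (summable_norm_one_sub_cpow_series (s := s) hw)
  rwa [(hasSum_one_sub_cpow hz).tsum_eq, (hasSum_one_sub_cpow hw).tsum_eq] at this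

theorem arg_one_sub_ne_pi {z : ℂ} (hz : ‖z‖ < 1) : (1 - z).arg ≠ Real.pi := by
  have := mem_slitPlane_of_norm_lt_one (z := -z) (by rwa [norm_neg])
  exact (mem_slitPlane_iff_arg.1 (by rwa [← sub_eq_add_neg] at this)).1

theorem cpow_ofReal_mul_conj_cpow_ofReal {u : ℂ} (hu : u.arg ≠ Real.pi) (s : ℝ) :
    u ^ (s : ℂ) * conj u ^ (s : ℂ) = ((normSq u) ^ s : ℝ) := by
  rw [conj_cpow u s hu, conj_ofReal, mul_conj, normSq_eq_norm_sq, norm_cpow_real,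
    Real.rpow_pow_comm (norm_nonneg u), normSq_eq_norm_sq]

theorem normSq_one_sub_ofReal_mul_exp (x φ : ℝ) :
    normSq (1 - x * exp (φ * I)) = 1 - 2 * x * Real.cos φ + x ^ 2 := by
  rw [normSq_apply]
  simp only [sub_re, sub_im, one_re, one_im, re_ofReal_mul, im_ofReal_mul, exp_ofReal_mul_I_re,
    exp_ofReal_mul_I_im]
  linear_combination x ^ 2 * Real.sin_sq_add_cos_sq φ

theorem ofReal_mul_exp_pow_mul_conj_pow (x φ : ℝ) {k n : ℕ} (hkn : k ≤ n) :
    (x * exp (φ * I)) ^ k * conj (x * exp (φ * I)) ^ (n - k)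
      = exp (I * φ * ((k : ℂ) - ((n : ℂ) - k))) * (x : ℂ) ^ n := by
  rw [map_mul, conj_ofReal, ← exp_conj, map_mul, conj_ofReal, conj_I, mul_pow, mul_pow,
    ← exp_nat_mul, ← exp_nat_mul, Nat.cast_sub hkn, ← pow_mul_pow_sub (x : ℂ) hkn,
    show I * φ * (k - (n - k)) = k * (φ * I) + (n - k) * (φ * -I) by ring, exp_add]
  ring

end Complex

theorem series_expansion_general (a : ℝ) (φ x : ℝ) (hx : |x| < 1) (α : ℕ → ℝ)
    (hα : ∀ k, α k = (-1) ^ k * (∏ i ∈ Finset.range k, (-(a / 2) - i)) / (Nat.factorial k)) :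
    HasSum
      (fun n : ℕ =>
        (∑ k ∈ Finset.range (n + 1),
          ((α k * α (n - k) : ℝ) : ℂ)
            * Complex.exp (Complex.I * φ * ((k : ℂ) - ((n : ℂ) - k)))) * (x : ℂ) ^ n)
      (((1 - 2 * x * Real.cos φ + x ^ 2) ^ (-(a / 2)) : ℝ) : ℂ) := by
  set z : ℂ := x * exp (φ * I)
  have hz : ‖z‖ < 1 := by simpa [z, norm_exp_ofReal_mul_I] using hx
  have hα_choose (k : ℕ) : (α k : ℂ) = (-1) ^ k * Ring.choose ((-(a / 2) : ℝ) : ℂ) k := by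
    rw [hα, Ring.choose_eq_prod_range_div_factorial]
    push_cast
    ring
  convert hasSum_one_sub_cpow_mul_one_sub_cpow (s := ((-(a / 2) : ℝ) : ℂ)) hz
    (w := conj z) (by rwa [norm_conj]) using 1
  · ext n
    rw [Finset.sum_mul]
    refine Finset.sum_congr rfl fun k hk ↦ ?_
    rw [mul_assoc, ← ofReal_mul_exp_pow_mul_conj_pow x φ (Finset.mem_range_succ_iff.1 hk),
      ofReal_mul, hα_choose, hα_choose]
    ring
  · rw [show 1 - conj z = conj (1 - z) by simp,
      cpow_ofReal_mul_conj_cpow_ofReal (arg_one_sub_ne_pi hz), normSq_one_sub_ofReal_mul_exp]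

/-- For |x| < 1, a > 0 and any angle φ:
(1 − 2x cos φ + x²)^{−a/2} = ∑_{n≥0} (∑_{k+l=n} α_k α_l e^{iφ(k−l)}) x^n,
where α_k are the Taylor coefficients of (1−z)^{−a/2}. -/
theorem series_expansion (a : ℝ) (ha : 0 < a) (φ x : ℝ) (hx : |x| < 1) (α : ℕ → ℝ)
    (hα : ∀ k, α k = (-1) ^ k * (∏ i ∈ Finset.range k, (-(a / 2) - i)) / (Nat.factorial k)) :
    HasSum
      (fun n : ℕ =>
        (∑ k ∈ Finset.range (n + 1),
          ((α k * α (n - k) : ℝ) : ℂ)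
            * Complex.exp (Complex.I * φ * ((k : ℂ) - ((n : ℂ) - k)))) * (x : ℂ) ^ n)
      (((1 - 2 * x * Real.cos φ + x ^ 2) ^ (-(a / 2)) : ℝ) : ℂ) :=
  series_expansion_general a φ x hx α hα
end

section
/- For a = 2, N ≥ 2, θ = 2π/N, and 0 ≤ p ≤ N−1, the sum ξ_p(1) = (1/2) ∑_{j=1}^{N−1} sin(πj(2p+1)/N)/sin(πj/N) equals (N − (2p+1))/2. In particular ξ_p(1) ≠ 0 if and only if p ≠ (N−1)/2. -/
/-!
The Dirichlet kernel identity `sin((2m+1)x) / sin x = 1 + 2 ∑_{k=1}^m cos(2kx)` turns each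
term of the sum into `1 + 2 ∑_{k=1}^p cos(2πjk/N)`. Exchanging the sums, for `1 ≤ k ≤ p < N`
the sum of `cos(2πjk/N)` over `j = 0, …, N-1` is the real part of a geometric sum of a
nontrivial `N`-th root of unity, hence `0`, so over `j = 1, …, N-1` it is `-1`. The total is
`(N - 1) - 2p`.
-/

open Finset Real

theorem sin_two_mul_add_one_mul (m : ℕ) (x : ℝ) :
    sin ((2 * m + 1) * x) = sin x * (1 + 2 * ∑ k ∈ Icc 1 m, cos (2 * k * x)) := by
  induction m with
  | zero => simp
  | succ n ih =>
    rw [sum_Icc_succ_top (by omega)]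
    push_cast at ih ⊢
    have hsin : (2 * ((n : ℝ) + 1) + 1) * x = (2 * n + 1) * x + 2 * x := by ring
    have hcos : 2 * ((n : ℝ) + 1) * x = (2 * n + 1) * x + x := by ring
    rw [hsin, hcos, sin_add, cos_add, sin_two_mul, cos_two_mul]
    linear_combination ih + 2 * sin ((2 * n + 1) * x) * sin_sq_add_cos_sq x

theorem sin_two_mul_add_one_mul_div_sin (m : ℕ) {x : ℝ} (hx : sin x ≠ 0) :
    sin ((2 * m + 1) * x) / sin x = 1 + 2 * ∑ k ∈ Icc 1 m, cos (2 * k * x) := by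
  rw [sin_two_mul_add_one_mul, mul_div_cancel_left₀ _ hx]

theorem sum_range_cos_two_pi_mul_div_eq_zero {N k : ℕ} (hk : ¬ N ∣ k) :
    ∑ j ∈ range N, cos (2 * π * (k * j) / N) = 0 := by
  rcases Nat.eq_zero_or_pos N with rfl | hN
  · simp
  have hζ := Complex.isPrimitiveRoot_exp N hN.ne'
  set ζ := Complex.exp (2 * π * Complex.I / N)
  have hζk : ζ ^ k ≠ 1 := by rwa [Ne, hζ.pow_eq_one_iff_dvd]
  have hgeom : ∑ j ∈ range N, (ζ ^ k) ^ j = 0 := by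
    rw [geom_sum_eq hζk, ← pow_mul, mul_comm, pow_mul, hζ.pow_eq_one, one_pow, sub_self,
      zero_div]
  have hre (j : ℕ) : ((ζ ^ k) ^ j).re = cos (2 * π * (k * j) / N) := by
    rw [← pow_mul, ← Complex.exp_nat_mul]
    convert Complex.exp_ofReal_mul_I_re (2 * π * (k * j) / N) using 3
    push_cast
    ring
  simpa [hre] using congrArg Complex.re hgeom

theorem sum_Icc_cos_two_pi_mul_div_eq_neg_one {N k : ℕ} (hN : 0 < N) (hk : ¬ N ∣ k) :
    ∑ j ∈ Icc 1 (N - 1), cos (2 * π * (k * j) / N) = -1 := by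
  have hrange : range N = insert 0 (Icc 1 (N - 1)) := by
    ext j; simp only [mem_range, mem_insert, mem_Icc]; omega
  have h := sum_range_cos_two_pi_mul_div_eq_zero hk
  rw [hrange, sum_insert (by simp)] at h
  simp only [CharP.cast_eq_zero, mul_zero, zero_div, cos_zero] at h
  linarith

theorem sum_Icc_sin_odd_mul_div_sin {N m : ℕ} (hm : m < N) :
    ∑ j ∈ Icc 1 (N - 1), sin (π * j * (2 * m + 1) / N) / sin (π * j / N) = N - (2 * m + 1) := by
  have hN : (0 : ℝ) < N := by exact_mod_cast (m.zero_le.trans_lt hm)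
  have hterm : ∀ j ∈ Icc 1 (N - 1), sin (π * j * (2 * m + 1) / N) / sin (π * j / N)
      = 1 + 2 * ∑ k ∈ Icc 1 m, cos (2 * π * (k * j) / N) := by
    intro j hj
    rw [mem_Icc] at hj
    have hjN : (j : ℝ) < N := by exact_mod_cast (show j < N by omega)
    have hj0 : (0 : ℝ) < j := by exact_mod_cast (show 0 < j by omega)
    have hsin : sin (π * j / N) ≠ 0 := by
      refine (sin_pos_of_pos_of_lt_pi (by positivity) ?_).ne'
      rw [div_lt_iff₀ hN]
      nlinarith [pi_pos]
    have hangle : π * j * (2 * m + 1) / N = (2 * m + 1) * (π * j / N) := by ring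
    rw [hangle, sin_two_mul_add_one_mul_div_sin m hsin]
    congr 3 with k
    congr 1
    ring
  have hcard : ((Icc 1 (N - 1)).card : ℝ) = N - 1 := by
    rw [Nat.card_Icc, Nat.add_sub_cancel, Nat.cast_pred (by exact_mod_cast hN)]
  have hcos : ∑ j ∈ Icc 1 (N - 1), ∑ k ∈ Icc 1 m, cos (2 * π * (k * j) / N) = -m := by
    rw [sum_comm]
    have hk : ∀ k ∈ Icc 1 m, ∑ j ∈ Icc 1 (N - 1), cos (2 * π * (k * j) / N) = -1 := by
      intro k hk
      rw [mem_Icc] at hk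
      exact sum_Icc_cos_two_pi_mul_div_eq_neg_one (by omega)
        (Nat.not_dvd_of_pos_of_lt (by omega) (by omega))
    simp [sum_congr rfl hk]
  rw [sum_congr rfl hterm, sum_add_distrib, ← mul_sum, hcos, sum_const, nsmul_one, hcard]
  ring

theorem xi_p_vortex_value_general (N : ℕ) (p : ℤ) (hp0 : 0 ≤ p) (hpN : p ≤ (N : ℤ) - 1) :
    (1 / 2) * (∑ j ∈ Finset.Icc 1 (N - 1),
        Real.sin (Real.pi * j * (2 * p + 1) / N) / Real.sin (Real.pi * j / N))
      = ((N : ℝ) - (2 * p + 1)) / 2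
    ∧ ((1 / 2) * (∑ j ∈ Finset.Icc 1 (N - 1),
          Real.sin (Real.pi * j * (2 * p + 1) / N) / Real.sin (Real.pi * j / N)) ≠ 0
        ↔ (p : ℝ) ≠ ((N : ℝ) - 1) / 2) := by
  lift p to ℕ using hp0 with m
  have hsum := sum_Icc_sin_odd_mul_div_sin (show m < N by omega)
  push_cast
  rw [hsum]
  refine ⟨by ring, not_congr ?_⟩
  constructor <;> intro h <;> linarith

/-- For a = 2, ξ_p(1) = (1/2)∑_{j=1}^{N−1} sin(πj(2p+1)/N)/sin(πj/N) = (N − (2p+1))/2;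
in particular ξ_p(1) ≠ 0 iff p ≠ (N−1)/2. -/
theorem xi_p_vortex_value (N : ℕ) (hN : 2 ≤ N) (p : ℤ) (hp0 : 0 ≤ p) (hpN : p ≤ (N : ℤ) - 1) :
    (1 / 2) * (∑ j ∈ Finset.Icc 1 (N - 1),
        Real.sin (Real.pi * j * (2 * p + 1) / N) / Real.sin (Real.pi * j / N))
      = ((N : ℝ) - (2 * p + 1)) / 2
    ∧ ((1 / 2) * (∑ j ∈ Finset.Icc 1 (N - 1),
          Real.sin (Real.pi * j * (2 * p + 1) / N) / Real.sin (Real.pi * j / N)) ≠ 0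
        ↔ (p : ℝ) ≠ ((N : ℝ) - 1) / 2) :=
  xi_p_vortex_value_general N p hp0 hpN
end

section
/- Let N ≥ 3, a ≥ 2, r₁, r₂ > 0, h₁ ≠ h₂ real, x = r₂/r₁, k = |h₂ − h₁|/r₁ > 0, θ = 2π/N, and p an integer with 1 ≤ p ≤ N−1. Then the sum ∑_{j=1}^N cos(jθp)/(1 − 2x cos(jθ) + x² + k²)^{a/2} is strictly positive. -/
/-!
Since `D ^ (-s) = Γ(s)⁻¹ ∫₀^∞ t ^ (s - 1) e ^ (-D t) dt`, the sum is a positive multiple of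
`∫₀^∞ t ^ (s - 1) e ^ (-(1 + x² + k²) t) ∑ⱼ cos (p j θ) e ^ (2 x t cos (j θ)) dt`, `s = a / 2`.
Expanding the exponential, the inner sum is `∑ₙ (2 x t) ^ n / n! · ∑ⱼ cos (p j θ) cos (j θ) ^ n`.
All moments `∑ⱼ cos (m j θ) cos (j θ) ^ n`, `m ∈ ℤ`, are nonnegative: for `n = 0` summing over the
`N`-th roots of unity gives `N` or `0`, and `cos A cos B = (cos (A + B) + cos (A - B)) / 2` makes
each moment of order `n + 1` an average of two of order `n`. The same recursion shows that the
moment with `m = n = p` is positive.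
-/

open Real Finset MeasureTheory

section RootsOfUnity

variable {N : ℕ}

theorem sum_Icc_cos_two_pi_div_mul (hN : 0 < N) (m : ℤ) :
    ∑ j ∈ Icc 1 N, cos (j * (2 * π / N) * m) = if (N : ℤ) ∣ m then (N : ℝ) else 0 := by
  have hNC : (N : ℂ) ≠ 0 := Nat.cast_ne_zero.mpr hN.ne'
  set u : ℂ := Complex.exp ((2 * π / N * m : ℝ) * Complex.I)
  have hcos (j : ℕ) : cos (j * (2 * π / N) * m) = (u ^ j).re := by
    rw [← Complex.exp_nat_mul, ← Complex.exp_ofReal_mul_I_re]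
    push_cast
    ring_nf
  simp_rw [hcos, ← Complex.re_sum]
  split_ifs with hdvd
  · obtain ⟨c, rfl⟩ := hdvd
    have hu : u = 1 := Complex.exp_eq_one_iff.mpr ⟨c, by push_cast; field_simp⟩
    simp [hu]
  · have hu : u ≠ 1 := by
      intro h
      obtain ⟨n, hn⟩ := Complex.exp_eq_one_iff.mp h
      have hr : 2 * π / N * m = n * (2 * π) := by
        exact_mod_cast mul_right_cancel₀ Complex.I_ne_zero (hn.trans (mul_assoc _ _ _).symm)
      have hm : (m : ℝ) = N * n := by
        field_simp at hr
        nlinarith [pi_pos]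
      exact hdvd ⟨n, by exact_mod_cast hm⟩
    have huN : u ^ N = 1 := by
      rw [← Complex.exp_nat_mul, ← Complex.exp_int_mul_two_pi_mul_I m]
      push_cast
      field_simp
    have hshift : ∑ j ∈ Icc 1 N, u ^ j = u * ∑ j ∈ range N, u ^ j :=
      calc ∑ j ∈ Icc 1 N, u ^ j = ∑ j ∈ range N, u ^ (j + 1) := by
            rw [range_eq_Ico, sum_Ico_add' (u ^ ·) 0 N 1]; rfl
        _ = u * ∑ j ∈ range N, u ^ j := by simp only [pow_succ', mul_sum]
    rw [hshift, geom_sum_eq hu, huN, sub_self, zero_div, mul_zero, Complex.zero_re]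

noncomputable def cosMoment (N n : ℕ) (m : ℤ) : ℝ :=
  ∑ j ∈ Icc 1 N, cos (j * (2 * π / N) * m) * cos (j * (2 * π / N)) ^ n

theorem cosMoment_zero (hN : 0 < N) (m : ℤ) :
    cosMoment N 0 m = if (N : ℤ) ∣ m then (N : ℝ) else 0 := by
  simp only [cosMoment, pow_zero, mul_one]
  exact sum_Icc_cos_two_pi_div_mul hN m

theorem cosMoment_succ (n : ℕ) (m : ℤ) :
    cosMoment N (n + 1) m = (cosMoment N n (m + 1) + cosMoment N n (m - 1)) / 2 := by
  simp only [cosMoment, ← sum_add_distrib, sum_div]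
  refine sum_congr rfl fun j _ => ?_
  push_cast
  rw [mul_add, mul_sub, mul_one, cos_add, cos_sub]
  ring

theorem cosMoment_nonneg (hN : 0 < N) (n : ℕ) (m : ℤ) : 0 ≤ cosMoment N n m := by
  induction n generalizing m with
  | zero => rw [cosMoment_zero hN]; split_ifs <;> positivity
  | succ n ih => rw [cosMoment_succ]; linarith [ih (m + 1), ih (m - 1)]

theorem cosMoment_self_pos (hN : 0 < N) (n : ℕ) : 0 < cosMoment N n n := by
  induction n with
  | zero => simp [cosMoment_zero hN, hN]
  | succ n ih =>
    rw [Nat.cast_succ, cosMoment_succ, add_sub_cancel_right]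
    linarith [cosMoment_nonneg hN n (n + 1 + 1)]

open Nat in
theorem sum_cos_mul_exp_pos (hN : 0 < N) (p : ℕ) {w : ℝ} (hw : 0 < w) :
    0 < ∑ j ∈ Icc 1 N, cos (j * (2 * π / N) * p) * exp (w * cos (j * (2 * π / N))) := by
  have hterm (n : ℕ) : ∑ j ∈ Icc 1 N,
      cos (j * (2 * π / N) * p) * ((w * cos (j * (2 * π / N))) ^ n / n !) =
        w ^ n / n ! * cosMoment N n p := by
    rw [cosMoment, mul_sum]
    refine sum_congr rfl fun j _ => ?_
    push_cast
    ring
  have hseries := hasSum_sum fun (j : ℕ) (_ : j ∈ Icc 1 N) =>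
    (NormedSpace.expSeries_div_hasSum_exp (w * cos (j * (2 * π / N)))).mul_left
      (cos (j * (2 * π / N) * p))
  simp only [hterm, ← exp_eq_exp_ℝ] at hseries
  rw [← hseries.tsum_eq]
  exact hseries.summable.tsum_pos (fun n => mul_nonneg (by positivity) (cosMoment_nonneg hN n p))
    p (mul_pos (by positivity) (cosMoment_self_pos hN p))

end RootsOfUnity

theorem integrableOn_rpow_sub_one_mul_exp_neg_mul {a r : ℝ} (ha : 0 < a) (hr : 0 < r) :
    IntegrableOn (fun t : ℝ => t ^ (a - 1) * exp (-(r * t))) (Set.Ioi 0) := by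
  simpa only [rpow_one, neg_mul] using
    integrableOn_rpow_mul_exp_neg_mul_rpow (by linarith : -1 < a - 1) one_pos hr

theorem sum_div_rpow_pos_of_sum_mul_exp_neg_pos {ι : Type*} {s : Finset ι} {c D : ι → ℝ}
    {a : ℝ} (ha : 0 < a) (hD : ∀ i ∈ s, 0 < D i)
    (h : ∀ t > 0, 0 < ∑ i ∈ s, c i * exp (-(D i * t))) :
    0 < ∑ i ∈ s, c i / D i ^ a := by
  have hint (i : ι) (hi : i ∈ s) :=
    (integrableOn_rpow_sub_one_mul_exp_neg_mul ha (hD i hi)).const_mul (c i)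
  have hmellin : Gamma a * ∑ i ∈ s, c i / D i ^ a =
      ∫ t in Set.Ioi 0, ∑ i ∈ s, c i * (t ^ (a - 1) * exp (-(D i * t))) := by
    rw [integral_finsetSum s hint, mul_sum]
    refine sum_congr rfl fun i hi => ?_
    rw [integral_const_mul, integral_rpow_mul_exp_neg_mul_Ioi ha (hD i hi), one_div,
      inv_rpow (hD i hi).le]
    ring
  have hpos (t : ℝ) (ht : t ∈ Set.Ioi 0) :
      0 < ∑ i ∈ s, c i * (t ^ (a - 1) * exp (-(D i * t))) := by
    simp only [mul_left_comm (c _), ← mul_sum]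
    exact mul_pos (rpow_pos_of_pos ht _) (h t ht)
  have hintegral : 0 < ∫ t in Set.Ioi 0, ∑ i ∈ s, c i * (t ^ (a - 1) * exp (-(D i * t))) := by
    rw [setIntegral_pos_iff_support_of_nonneg_ae
      (ae_restrict_of_forall_mem measurableSet_Ioi fun t ht => (hpos t ht).le)
      (integrable_finsetSum s hint)]
    refine lt_of_lt_of_le ?_ (measure_mono fun t ht => ⟨(hpos t ht).ne', ht⟩)
    simp [volume_Ioi]
  exact pos_of_mul_pos_right (hmellin ▸ hintegral) (Gamma_pos_of_pos ha).le

theorem spatial_sum_pos_general (N : ℕ) (hN : 3 ≤ N) (a : ℝ) (ha : 2 ≤ a)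
    (r₁ r₂ h₁ h₂ : ℝ) (hr₁ : 0 < r₁) (hr₂ : 0 < r₂) (hh : h₁ ≠ h₂)
    (x k : ℝ) (hx : x = r₂ / r₁) (hk : k = |h₂ - h₁| / r₁)
    (p : ℕ) :
    0 < ∑ j ∈ Finset.Icc 1 N,
      Real.cos ((j : ℝ) * (2 * Real.pi / N) * p)
        / (1 - 2 * x * Real.cos ((j : ℝ) * (2 * Real.pi / N)) + x ^ 2 + k ^ 2) ^ (a / 2) := by
  have hx0 : 0 < x := hx ▸ div_pos hr₂ hr₁
  have hk0 : 0 < k := hk ▸ div_pos (abs_pos.mpr (sub_ne_zero.mpr hh.symm)) hr₁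
  refine sum_div_rpow_pos_of_sum_mul_exp_neg_pos (by linarith) (fun j _ => ?_) fun t ht => ?_
  · nlinarith [sq_nonneg (x - cos (j * (2 * π / N))), sin_sq_add_cos_sq (j * (2 * π / N))]
  · have hfactor : ∑ j ∈ Icc 1 N, cos (j * (2 * π / N) * p) *
          exp (-((1 - 2 * x * cos (j * (2 * π / N)) + x ^ 2 + k ^ 2) * t)) =
        exp (-((1 + x ^ 2 + k ^ 2) * t)) *
          ∑ j ∈ Icc 1 N, cos (j * (2 * π / N) * p) * exp (2 * x * t * cos (j * (2 * π / N))) := by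
      rw [mul_sum]
      refine sum_congr rfl fun j _ => ?_
      rw [mul_left_comm, ← exp_add]
      ring_nf
    rw [hfactor]
    exact mul_pos (exp_pos _) (sum_cos_mul_exp_pos (by omega) p (by positivity))

/-- For N ≥ 3, a ≥ 2, positive radii, h₁ ≠ h₂, x = r₂/r₁, k = |h₂ − h₁|/r₁ and
1 ≤ p ≤ N−1, ∑_{j=1}^N cos(jθp)/(1 − 2x cos(jθ) + x² + k²)^{a/2} > 0, θ = 2π/N. -/
theorem spatial_sum_pos (N : ℕ) (hN : 3 ≤ N) (a : ℝ) (ha : 2 ≤ a)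
    (r₁ r₂ h₁ h₂ : ℝ) (hr₁ : 0 < r₁) (hr₂ : 0 < r₂) (hh : h₁ ≠ h₂)
    (x k : ℝ) (hx : x = r₂ / r₁) (hk : k = |h₂ - h₁| / r₁)
    (p : ℕ) (hp1 : 1 ≤ p) (hp2 : p ≤ N - 1) :
    0 < ∑ j ∈ Finset.Icc 1 N,
      Real.cos ((j : ℝ) * (2 * Real.pi / N) * p)
        / (1 - 2 * x * Real.cos ((j : ℝ) * (2 * Real.pi / N)) + x ^ 2 + k ^ 2) ^ (a / 2) :=
  spatial_sum_pos_general N hN a ha r₁ r₂ h₁ h₂ hr₁ hr₂ hh x k hx hk p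
end
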